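/- Let U : ℝ² → ℝ² be a bounded C² entire solution of ΔU = ∇_u W(U) which is a local minimizer of E, satisfying E(U,B_R) ≤ C₁R for all R > 0, and set W̃(R) := (1/R)∫_{B_R} W(U) dx. Then for all 0 < R₁ < R₂: W̃(R₂) − W̃(R₁) ≥ −√(C₁/2) · (R₂^{1/2}/R₁) · ( ∫_{B_{R₂} \ B_{R₁}} ( √(W(U)) − (1/√2)|∇U| )² dx )^{1/2}. -/

import Mathlib

open MeasureTheory Metric Set Filter
open scoped InnerProductSpace ENNReal Topology

noncomputable section

notation "ℝ²" => EuclideanSpace ℝ (Fin 2)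

/-- The Laplacian of a map `U : ℝ² → ℝ²`, as the sum of second partial derivatives. -/
def lap (U : ℝ² → ℝ²) (x : ℝ²) : ℝ² :=
  ∑ i : Fin 2, fderiv ℝ (fun y => fderiv ℝ U y (EuclideanSpace.single i 1)) x
    (EuclideanSpace.single i 1)

/-- `W` is a triple-well potential with wells `p 0, p 1, p 2`. -/
structure TripleWell (W : ℝ² → ℝ) (p : Fin 3 → ℝ²) : Prop where
  smooth : ContDiff ℝ 2 W
  nonneg : ∀ q, 0 ≤ W q
  zeros : ∀ q, W q = 0 ↔ q ∈ Set.range p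
  inj : Function.Injective p
  nondeg : ∃ b > 0, ∀ i, ∀ v : ℝ², b * ‖v‖ ^ 2 ≤ iteratedFDeriv ℝ 2 W (p i) ![v, v]
  grad_confining : ∃ M > 0, ∀ q : ℝ², M ≤ ‖q‖ → 0 ≤ ⟪q, gradient W q⟫_ℝ

/-- The Allen–Cahn energy of `u` on the set `A`. -/
def energy (W : ℝ² → ℝ) (u : ℝ² → ℝ²) (A : Set ℝ²) : ℝ :=
  ∫ x in A, ((1 / 2) * ‖fderiv ℝ u x‖ ^ 2 + W (u x))

/-- The rescaled Allen–Cahn energy `E_R`. -/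
def energyR (W : ℝ² → ℝ) (R : ℝ) (u : ℝ² → ℝ²) (A : Set ℝ²) : ℝ :=
  ∫ x in A, (R * W (u x) + (1 / (2 * R)) * ‖fderiv ℝ u x‖ ^ 2)

/-- `U` is a local minimizer of the energy `E`. -/
def IsLocalMinimizer (W : ℝ² → ℝ) (U : ℝ² → ℝ²) : Prop :=
  ∀ K : Set ℝ², IsCompact K → ∀ v : ℝ² → ℝ², ContDiff ℝ 1 v →
    (∀ x ∉ K, v x = U x) → energy W U K ≤ energy W v K

/-- `U` is a (C²) entire solution of `ΔU = ∇W(U)`. -/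
def IsEntireSolution (W : ℝ² → ℝ) (U : ℝ² → ℝ²) : Prop :=
  ContDiff ℝ 2 U ∧ ∀ x, lap U x = gradient W (U x)

/-- The degenerate Riemannian distance induced by `W`. -/
def wdist (W : ℝ² → ℝ) (a c : ℝ²) : ℝ :=
  sInf {L | ∃ γ : ℝ → ℝ², ContDiff ℝ 1 γ ∧ γ 0 = a ∧ γ 1 = c ∧
    L = Real.sqrt 2 * ∫ t in (0:ℝ)..1, Real.sqrt (W (γ t)) * ‖deriv γ t‖}

/-- `ζ` is a minimizing heteroclinic connection between the wells `a` and `c`. -/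
def IsMinHeteroclinic (W : ℝ² → ℝ) (a c : ℝ²) (ζ : ℝ → ℝ²) : Prop :=
  ContDiff ℝ 2 ζ ∧ (∀ t, deriv (deriv ζ) t = gradient W (ζ t)) ∧
  Tendsto ζ atBot (𝓝 a) ∧ Tendsto ζ atTop (𝓝 c) ∧
  (∫ t : ℝ, (W (ζ t) + (1 / 2) * ‖deriv ζ t‖ ^ 2)) = wdist W a c

/-- strict triangle inequality between the wells. -/
def StrictTriangle (W : ℝ² → ℝ) (p : Fin 3 → ℝ²) : Prop :=
  ∀ i j k : Fin 3, i ≠ j → j ≠ k → i ≠ k →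
    wdist W (p i) (p j) < wdist W (p i) (p k) + wdist W (p k) (p j)

/-- For each pair of wells there is a (unique up to translation) minimizing heteroclinic. -/
def HeteroclinicSetup (W : ℝ² → ℝ) (p : Fin 3 → ℝ²) (ζ : Fin 3 → Fin 3 → ℝ → ℝ²) : Prop :=
  ∀ i j : Fin 3, i < j →
    IsMinHeteroclinic W (p i) (p j) (ζ i j) ∧
    ∀ ζ' : ℝ → ℝ², IsMinHeteroclinic W (p i) (p j) ζ' →
      ∃ s : ℝ, ∀ t, ζ' t = ζ i j (t + s)

/-- The closed curve `Λ` made of the three heteroclinics. -/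
def hetLambda (p : Fin 3 → ℝ²) (ζ : Fin 3 → Fin 3 → ℝ → ℝ²) : Set ℝ² :=
  Set.range p ∪ Set.range (ζ 0 1) ∪ Set.range (ζ 1 2) ∪ Set.range (ζ 0 2)

/-- The open sector with vertex the origin, initial angle `θ` and opening angle `α`. -/
def sector (θ α : ℝ) : Set ℝ² :=
  {x | ∃ r : ℝ, 0 < r ∧ ∃ φ : ℝ, θ ≤ φ ∧ φ < θ + α ∧
    x = r • (WithLp.toLp 2 ![Real.cos φ, Real.sin φ] : ℝ²)}

/-- `u` is a minimal-triple-junction map: constant equal to `p ℓ` on each of three sectors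
whose opening angles satisfy the balancing (sine) condition. -/
def IsTripleJunction (W : ℝ² → ℝ) (p : Fin 3 → ℝ²) (u : ℝ² → ℝ²) : Prop :=
  ∃ θ₀ : ℝ, ∃ α : Fin 3 → ℝ, (∀ i, 0 < α i) ∧ α 0 + α 1 + α 2 = 2 * Real.pi ∧
    Real.sin (α 0) / wdist W (p 1) (p 2) = Real.sin (α 1) / wdist W (p 0) (p 2) ∧
    Real.sin (α 1) / wdist W (p 0) (p 2) = Real.sin (α 2) / wdist W (p 0) (p 1) ∧
    (∀ x ∈ sector θ₀ (α 0), u x = p 0) ∧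
    (∀ x ∈ sector (θ₀ + α 0) (α 1), u x = p 1) ∧
    (∀ x ∈ sector (θ₀ + α 0 + α 1) (α 2), u x = p 2)

/-- The blowdown `U_R(x) = U(Rx)`. -/
def blowdown (U : ℝ² → ℝ²) (R : ℝ) : ℝ² → ℝ² := fun x => U (R • x)

/-- Radial (normal) derivative `∂_ν U = ∇U · x/|x|`. -/
def radialDeriv (U : ℝ² → ℝ²) (x : ℝ²) : ℝ² := fderiv ℝ U x (‖x‖⁻¹ • x)

/-- The unit tangent direction at `x`. -/
def tangentVec (x : ℝ²) : ℝ² := WithLp.toLp 2 ![-(x 1), x 0]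

/-- Tangential derivative `∂_s U` along circles centered at the origin. -/
def tangentialDeriv (U : ℝ² → ℝ²) (x : ℝ²) : ℝ² := fderiv ℝ U x (‖x‖⁻¹ • tangentVec x)

/-!
Write `x = r (cos θ, sin θ)` and let `P(r, θ) = ½|∂_s U|² + W(U) - ½|∂_r U|²` on the circle of
radius `r`. Differentiating the `2π`-periodic function `θ ↦ ⟨∂_r U, ∂_s U⟩` and using
`ΔU = ∇W(U)` gives `d/dr (r² ∫ P dθ) = 2 r ∫ W(U) dθ`, which integrates to Pohozaev's identity
`∫_{B_R} W(U) = R²/2 ∫ P(R, θ) dθ`. Hence `W̃(R) = R/2 ∫ P(R, θ) dθ`, and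
`W̃'(r) = ½ ∫ (W(U) + ½|∂_r U|² - ½|∂_s U|²) dθ ≥ -½ ∫ |ξ| η dθ`, where
`ξ = √W(U) - |∇U|/√2` and `η = √W(U) + |∇U|/√2`. Integrating over `R₁ < r < R₂` (where
`r / R₁ ≥ 1` turns `dr dθ` into the area element) and applying Cauchy–Schwarz together with
`∫ η² ≤ 2 E(U, B_{R₂}) ≤ 2 C₁ R₂` gives the estimate.
-/

lemma hasDerivAt_intervalIntegral_of_continuous {E : Type*} [NormedAddCommGroup E]
    [NormedSpace ℝ E] {F F' : ℝ → ℝ → E} (a b : ℝ) (hF : Continuous (Function.uncurry F))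
    (hF' : Continuous (Function.uncurry F')) (hd : ∀ r θ, HasDerivAt (F · θ) (F' r θ) r)
    (r₀ : ℝ) : HasDerivAt (fun r => ∫ θ in a..b, F r θ) (∫ θ in a..b, F' r₀ θ) r₀ := by
  obtain ⟨C, hC⟩ := ((isCompact_closedBall r₀ 1).prod isCompact_uIcc).exists_bound_of_continuousOn
    hF'.continuousOn
  refine (intervalIntegral.hasDerivAt_integral_of_dominated_loc_of_deriv_le (bound := fun _ => C)
    (ball_mem_nhds r₀ one_pos) (.of_forall fun r => (hF.uncurry_left r).aestronglyMeasurable)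
    ((hF.uncurry_left r₀).intervalIntegrable a b)
    (hF'.uncurry_left r₀).aestronglyMeasurable ?_ intervalIntegrable_const
    (.of_forall fun θ _ r _ => hd r θ)).2
  exact .of_forall fun θ hθ r hr =>
    hC (r, θ) ⟨ball_subset_closedBall hr, uIoc_subset_uIcc hθ⟩

lemma integral_mul_le_sqrt_mul_sqrt {α : Type*} [MeasurableSpace α] {μ : Measure α}
    {f g : α → ℝ} (hf : 0 ≤ᵐ[μ] f) (hg : 0 ≤ᵐ[μ] g) (hf2 : MemLp f 2 μ) (hg2 : MemLp g 2 μ) :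
    ∫ a, f a * g a ∂μ ≤ √(∫ a, f a ^ 2 ∂μ) * √(∫ a, g a ^ 2 ∂μ) := by
  have h := integral_mul_le_Lp_mul_Lq_of_nonneg Real.HolderConjugate.two_two hf hg
    (by simpa using hf2) (by simpa using hg2)
  simpa only [Real.rpow_two, Real.sqrt_eq_rpow, one_div] using h

lemma Continuous.memLp_two_restrict {X : Type*} [MetricSpace X] [ProperSpace X]
    [MeasurableSpace X] [OpensMeasurableSpace X] {μ : Measure X} [IsFiniteMeasureOnCompacts μ]
    {f : X → ℝ} (hf : Continuous f) {s : Set X} (hs : Bornology.IsBounded s) :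
    MemLp f 2 (μ.restrict s) :=
  (memLp_two_iff_integrable_sq hf.aestronglyMeasurable).2
    (((hf.pow 2).continuousOn.integrableOn_compact hs.isCompact_closure).mono_set subset_closure)

lemma neg_abs_sub_mul_add_le {E F : Type*} [NormedAddCommGroup E] [NormedSpace ℝ E]
    [NormedAddCommGroup F] [NormedSpace ℝ F] {w : ℝ} (hw : 0 ≤ w) (L : E →L[ℝ] F) (u : E)
    {v : E} (hv : ‖v‖ ≤ 1) :
    -(|√w - 1 / √2 * ‖L‖| * (√w + 1 / √2 * ‖L‖)) ≤ w + ‖L u‖ ^ 2 / 2 - ‖L v‖ ^ 2 / 2 := by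
  have hprod : (√w - 1 / √2 * ‖L‖) * (√w + 1 / √2 * ‖L‖) = w - ‖L‖ ^ 2 / 2 := by
    ring_nf
    rw [Real.sq_sqrt hw, inv_pow, Real.sq_sqrt zero_le_two]
    ring
  have hLv : ‖L v‖ ≤ ‖L‖ := L.le_of_opNorm_le_of_le le_rfl hv |>.trans_eq (mul_one _)
  have habs : -|√w - 1 / √2 * ‖L‖| * (√w + 1 / √2 * ‖L‖)
      ≤ (√w - 1 / √2 * ‖L‖) * (√w + 1 / √2 * ‖L‖) :=
    mul_le_mul_of_nonneg_right (neg_abs_le _) (by positivity)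
  nlinarith [norm_nonneg (L v), sq_nonneg ‖L u‖]

lemma ContDiff.hasFDerivAt_fderiv {E F : Type*} [NormedAddCommGroup E] [NormedSpace ℝ E]
    [NormedAddCommGroup F] [NormedSpace ℝ F] {f : E → F} (hf : ContDiff ℝ 2 f) (x : E) :
    HasFDerivAt (fderiv ℝ f) (fderiv ℝ (fderiv ℝ f) x) x :=
  ((hf.fderiv_right le_rfl).differentiable one_ne_zero x).hasFDerivAt

lemma ContDiff.continuous_gradient {E : Type*} [NormedAddCommGroup E] [InnerProductSpace ℝ E]
    [CompleteSpace E] {f : E → ℝ} (hf : ContDiff ℝ 1 f) : Continuous (gradient f) :=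
  (InnerProductSpace.toDual ℝ E).symm.continuous.comp (hf.continuous_fderiv one_ne_zero)

namespace AllenCahn

open Real

def polarUnit (θ : ℝ) : ℝ² :=
  cos θ • EuclideanSpace.single 0 1 + sin θ • EuclideanSpace.single 1 1

def polarTangent (θ : ℝ) : ℝ² :=
  (-sin θ) • EuclideanSpace.single 0 1 + cos θ • EuclideanSpace.single 1 1

lemma norm_polarUnit (θ : ℝ) : ‖polarUnit θ‖ = 1 := by
  simp [polarUnit, EuclideanSpace.norm_eq, Fin.sum_univ_two]

lemma norm_polarTangent (θ : ℝ) : ‖polarTangent θ‖ = 1 := by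
  simp [polarTangent, EuclideanSpace.norm_eq, Fin.sum_univ_two]

@[fun_prop]
lemma continuous_polarUnit : Continuous polarUnit := by
  unfold polarUnit; fun_prop

@[fun_prop]
lemma continuous_polarTangent : Continuous polarTangent := by
  unfold polarTangent; fun_prop

lemma hasDerivAt_polarUnit (θ : ℝ) : HasDerivAt polarUnit (polarTangent θ) θ :=
  ((hasDerivAt_cos θ).smul_const _).add ((hasDerivAt_sin θ).smul_const _)

lemma hasDerivAt_polarTangent (θ : ℝ) : HasDerivAt polarTangent (-polarUnit θ) θ := by
  refine (((hasDerivAt_sin θ).neg.smul_const _).add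
    ((hasDerivAt_cos θ).smul_const _)).congr_deriv ?_
  simp only [polarUnit, neg_add, neg_smul]

lemma polarUnit_neg_pi : polarUnit (-π) = polarUnit π := by
  simp [polarUnit]

lemma polarTangent_neg_pi : polarTangent (-π) = polarTangent π := by
  simp [polarTangent]

lemma apply_polarUnit_add_apply_polarTangent {F : Type*} [NormedAddCommGroup F]
    [NormedSpace ℝ F] (B : ℝ² →L[ℝ] ℝ² →L[ℝ] F) (θ : ℝ) :
    B (polarUnit θ) (polarUnit θ) + B (polarTangent θ) (polarTangent θ)
      = B (EuclideanSpace.single 0 1) (EuclideanSpace.single 0 1)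
        + B (EuclideanSpace.single 1 1) (EuclideanSpace.single 1 1) := by
  simp only [polarUnit, polarTangent, map_add, map_smul, add_apply, smul_apply]
  match_scalars <;> first | ring1 | linear_combination cos_sq_add_sin_sq θ

lemma lap_eq_fderiv_fderiv_polarUnit_add {U : ℝ² → ℝ²} {x : ℝ²}
    (hU : DifferentiableAt ℝ (fderiv ℝ U) x) (θ : ℝ) :
    lap U x = fderiv ℝ (fderiv ℝ U) x (polarUnit θ) (polarUnit θ)
      + fderiv ℝ (fderiv ℝ U) x (polarTangent θ) (polarTangent θ) := by
  rw [apply_polarUnit_add_apply_polarTangent, lap, Fin.sum_univ_two]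
  simp [fderiv_clm_apply hU (differentiableAt_const _)]

lemma orthonormalBasisOneI_repr_polarCoord_symm (p : ℝ × ℝ) :
    Complex.orthonormalBasisOneI.repr (Complex.polarCoord.symm p) = p.1 • polarUnit p.2 := by
  ext i
  fin_cases i <;>
    simp [polarUnit, Complex.polarCoord_symm_apply, Complex.cos_ofReal_re, Complex.sin_ofReal_re]

lemma integral_eq_integral_polarCoord_target (h : ℝ² → ℝ) :
    ∫ x, h x = ∫ p in polarCoord.target, p.1 * h (p.1 • polarUnit p.2) := by
  have hrepr := Complex.orthonormalBasisOneI.repr.measurePreserving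
  rw [← hrepr.integral_comp Complex.orthonormalBasisOneI.repr.toHomeomorph.measurableEmbedding,
    ← Complex.integral_comp_polarCoord_symm]
  simp only [orthonormalBasisOneI_repr_polarCoord_symm, smul_eq_mul]

lemma smul_polarUnit_mem_annulus_iff {r : ℝ} (hr : 0 < r) (θ : ℝ) (R₁ R₂ : ℝ) :
    r • polarUnit θ ∈ ball (0 : ℝ²) R₂ \ ball 0 R₁ ↔ r ∈ Ico R₁ R₂ := by
  simp [norm_smul, norm_polarUnit, abs_of_pos hr, and_comm]

lemma setIntegral_annulus_eq_polar {f : ℝ² → ℝ} (hf : Continuous f) {R₁ R₂ : ℝ} (h0 : 0 ≤ R₁)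
    (h12 : R₁ ≤ R₂) :
    ∫ x in ball 0 R₂ \ ball 0 R₁, f x = ∫ r in R₁..R₂, ∫ θ in (-π)..π, r * f (r • polarUnit θ) := by
  set S : Set ℝ² := ball 0 R₂ \ ball 0 R₁
  set g : ℝ × ℝ → ℝ := fun p => p.1 * f (p.1 • polarUnit p.2)
  have hg : Continuous g := by fun_prop
  have h_indicator : ∀ p ∈ polarCoord.target,
      p.1 * S.indicator f (p.1 • polarUnit p.2) = (Ico R₁ R₂ ×ˢ univ).indicator g p := by
    rintro ⟨r, θ⟩ ⟨hr, -⟩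
    by_cases hrR : r ∈ Ico R₁ R₂
    · simp [S, g, indicator_of_mem, (smul_polarUnit_mem_annulus_iff hr θ R₁ R₂).2 hrR, hrR]
    · simp [S, g, indicator_of_notMem, (smul_polarUnit_mem_annulus_iff hr θ R₁ R₂).not.2 hrR, hrR]
  have h_radial : (Ioi 0 ∩ Ico R₁ R₂ : Set ℝ) =ᵐ[volume] Ioc R₁ R₂ := by
    have h : (Ici 0 ∩ Ico R₁ R₂ : Set ℝ) = Ico R₁ R₂ := inter_eq_right.2 fun r hr => h0.trans hr.1
    exact (Ioi_ae_eq_Ici.inter (ae_eq_refl _)).trans (h.symm ▸ Ico_ae_eq_Ioc)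
  have h_int : IntegrableOn g ((Ioi 0 ∩ Ico R₁ R₂) ×ˢ Ioo (-π) π) (volume.prod volume) :=
    (hg.continuousOn.integrableOn_compact (isCompact_Icc.prod isCompact_Icc)).mono_set
      (prod_mono (inter_subset_right.trans Ico_subset_Icc_self) Ioo_subset_Icc_self)
  calc ∫ x in S, f x
      = ∫ p in polarCoord.target, p.1 * S.indicator f (p.1 • polarUnit p.2) := by
        rw [← integral_indicator (measurableSet_ball.diff measurableSet_ball),
          integral_eq_integral_polarCoord_target]
    _ = ∫ p in polarCoord.target ∩ Ico R₁ R₂ ×ˢ univ, g p := by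
        rw [setIntegral_congr_fun polarCoord.open_target.measurableSet h_indicator,
          setIntegral_indicator (measurableSet_Ico.prod MeasurableSet.univ)]
    _ = ∫ r in Ioi 0 ∩ Ico R₁ R₂, ∫ θ in Ioo (-π) π, g (r, θ) := by
        rw [polarCoord_target, prod_inter_prod, inter_univ, Measure.volume_eq_prod,
          setIntegral_prod g h_int]
    _ = ∫ r in R₁..R₂, ∫ θ in (-π)..π, r * f (r • polarUnit θ) := by
        rw [setIntegral_congr_set h_radial, intervalIntegral.integral_of_le h12]
        refine setIntegral_congr_fun measurableSet_Ioc fun r _ => ?_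
        rw [intervalIntegral.integral_of_le (by linarith [pi_pos]), integral_Ioc_eq_integral_Ioo]

section Pohozaev

variable {U : ℝ² → ℝ²} {W : ℝ² → ℝ}

/-- Written in arclength `s = r θ` on `∂B_r`, `r ∫ pohozaevDensity W U r θ dθ` is the boundary
term `∫_{∂B_r} (½|∂_s U|² + W(U) - ½|∂_ν U|²)` of Pohozaev's identity. -/
def pohozaevDensity (W : ℝ² → ℝ) (U : ℝ² → ℝ²) (r θ : ℝ) : ℝ :=
  ‖fderiv ℝ U (r • polarUnit θ) (polarTangent θ)‖ ^ 2 / 2 + W (U (r • polarUnit θ))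
    - ‖fderiv ℝ U (r • polarUnit θ) (polarUnit θ)‖ ^ 2 / 2

def radialDerivPohozaevDensity (W : ℝ² → ℝ) (U : ℝ² → ℝ²) (r θ : ℝ) : ℝ :=
  ⟪fderiv ℝ U (r • polarUnit θ) (polarTangent θ),
      fderiv ℝ (fderiv ℝ U) (r • polarUnit θ) (polarUnit θ) (polarTangent θ)⟫_ℝ
    + ⟪gradient W (U (r • polarUnit θ)), fderiv ℝ U (r • polarUnit θ) (polarUnit θ)⟫_ℝ
    - ⟪fderiv ℝ U (r • polarUnit θ) (polarUnit θ),
      fderiv ℝ (fderiv ℝ U) (r • polarUnit θ) (polarUnit θ) (polarUnit θ)⟫_ℝ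

lemma continuous_potential_polar (hU : Continuous U) (hW : Continuous W) :
    Continuous (Function.uncurry fun (r θ : ℝ) => W (U (r • polarUnit θ))) := by
  unfold Function.uncurry
  fun_prop

lemma hasDerivAt_pohozaevDensity (hU : ContDiff ℝ 2 U) (hW : Differentiable ℝ W) (r θ : ℝ) :
    HasDerivAt (pohozaevDensity W U · θ) (radialDerivPohozaevDensity W U r θ) r := by
  have hx : HasDerivAt (· • polarUnit θ) (polarUnit θ) r :=
    ((hasDerivAt_id r).smul_const (polarUnit θ)).congr_deriv (one_smul ℝ _)
  have hDU (v : ℝ²) : HasDerivAt (fun s => fderiv ℝ U (s • polarUnit θ) v)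
      (fderiv ℝ (fderiv ℝ U) (r • polarUnit θ) (polarUnit θ) v) r :=
    (((hU.hasFDerivAt_fderiv _).comp_hasDerivAt r hx).clm_apply (hasDerivAt_const r v)).congr_deriv
      (by rw [map_zero, add_zero])
  have hWU : HasDerivAt (fun s => W (U (s • polarUnit θ)))
      ⟪gradient W (U (r • polarUnit θ)), fderiv ℝ U (r • polarUnit θ) (polarUnit θ)⟫_ℝ r :=
    (hW _).hasGradientAt.hasFDerivAt.comp_hasDerivAt r
      (((hU.differentiable two_ne_zero) _).hasFDerivAt.comp_hasDerivAt r hx)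
  refine ((((hDU (polarTangent θ)).norm_sq.div_const 2).add hWU).sub
    ((hDU (polarUnit θ)).norm_sq.div_const 2)).congr_deriv ?_
  simp only [radialDerivPohozaevDensity]
  ring

lemma continuous_pohozaevDensity (hU : ContDiff ℝ 2 U) (hW : Continuous W) :
    Continuous (Function.uncurry (pohozaevDensity W U)) := by
  have := hU.continuous_fderiv two_ne_zero
  have := hU.continuous
  unfold Function.uncurry pohozaevDensity
  fun_prop

lemma continuous_radialDerivPohozaevDensity (hU : ContDiff ℝ 2 U) (hW : ContDiff ℝ 1 W) :
    Continuous (Function.uncurry (radialDerivPohozaevDensity W U)) := by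
  have := hU.continuous_fderiv two_ne_zero
  have := (hU.fderiv_right le_rfl).continuous_fderiv one_ne_zero
  have := hU.continuous
  have := hW.continuous_gradient
  unfold Function.uncurry radialDerivPohozaevDensity
  fun_prop

lemma continuous_potential_sub_half_pohozaevDensity (hU : ContDiff ℝ 2 U) (hW : Continuous W) :
    Continuous (Function.uncurry fun r θ =>
      W (U (r • polarUnit θ)) - pohozaevDensity W U r θ / 2) :=
  (continuous_potential_polar hU.continuous hW).sub ((continuous_pohozaevDensity hU hW).div_const 2)

lemma hasDerivAt_inner_fderiv_polarUnit_polarTangent (hU : ContDiff ℝ 2 U)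
    (hpde : ∀ x, lap U x = gradient W (U x)) (r θ : ℝ) :
    HasDerivAt (fun t => ⟪fderiv ℝ U (r • polarUnit t) (polarUnit t),
        fderiv ℝ U (r • polarUnit t) (polarTangent t)⟫_ℝ)
      (r * radialDerivPohozaevDensity W U r θ + 2 * pohozaevDensity W U r θ
        - 2 * W (U (r • polarUnit θ))) θ := by
  set x := r • polarUnit θ
  set B := fderiv ℝ (fderiv ℝ U) x
  have hDU : HasDerivAt (fun t => fderiv ℝ U (r • polarUnit t)) (B (r • polarTangent θ)) θ :=
    (hU.hasFDerivAt_fderiv x).comp_hasDerivAt θ ((hasDerivAt_polarUnit θ).const_smul r)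
  have hsymm : B (polarTangent θ) (polarUnit θ) = B (polarUnit θ) (polarTangent θ) :=
    hU.contDiffAt.isSymmSndFDerivAt (by simp) _ _
  have hlap : B (polarTangent θ) (polarTangent θ)
      = gradient W (U x) - B (polarUnit θ) (polarUnit θ) := by
    rw [← hpde, lap_eq_fderiv_fderiv_polarUnit_add ((hU.hasFDerivAt_fderiv x).differentiableAt) θ]
    abel
  refine ((hDU.clm_apply (hasDerivAt_polarUnit θ)).inner ℝ
    (hDU.clm_apply (hasDerivAt_polarTangent θ))).congr_deriv ?_
  simp only [map_smul, smul_apply, map_neg, inner_add_left, inner_add_right, real_inner_smul_left,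
    real_inner_smul_right, inner_neg_right, hsymm, hlap, inner_sub_right,
    radialDerivPohozaevDensity, pohozaevDensity, real_inner_self_eq_norm_sq]
  rw [real_inner_comm (B (polarUnit θ) (polarTangent θ)), real_inner_comm (gradient W (U x))]
  ring

lemma integral_pohozaev_identity (hU : ContDiff ℝ 2 U) (hW : ContDiff ℝ 1 W)
    (hpde : ∀ x, lap U x = gradient W (U x)) (r : ℝ) :
    r * (∫ θ in (-π)..π, radialDerivPohozaevDensity W U r θ)
        + 2 * ∫ θ in (-π)..π, pohozaevDensity W U r θ
      = 2 * ∫ θ in (-π)..π, W (U (r • polarUnit θ)) := by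
  have hP : IntervalIntegrable (pohozaevDensity W U r) volume (-π) π :=
    ((continuous_pohozaevDensity hU hW.continuous).uncurry_left r).intervalIntegrable _ _
  have hP' : IntervalIntegrable (radialDerivPohozaevDensity W U r) volume (-π) π :=
    ((continuous_radialDerivPohozaevDensity hU hW).uncurry_left r).intervalIntegrable _ _
  have hWU : IntervalIntegrable (fun θ => W (U (r • polarUnit θ))) volume (-π) π := by
    have := hW.continuous; have := hU.continuous
    exact Continuous.intervalIntegrable (by fun_prop) _ _
  have hperiodic := intervalIntegral.integral_eq_sub_of_hasDerivAt
    (fun θ _ => hasDerivAt_inner_fderiv_polarUnit_polarTangent hU hpde r θ)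
    (((hP'.const_mul r).add (hP.const_mul 2)).sub (hWU.const_mul 2))
  rw [intervalIntegral.integral_sub ((hP'.const_mul r).add (hP.const_mul 2)) (hWU.const_mul 2),
    intervalIntegral.integral_add (hP'.const_mul r) (hP.const_mul 2),
    intervalIntegral.integral_const_mul, intervalIntegral.integral_const_mul,
    intervalIntegral.integral_const_mul, polarUnit_neg_pi, polarTangent_neg_pi, sub_self]
    at hperiodic
  linarith

lemma hasDerivAt_integral_pohozaevDensity (hU : ContDiff ℝ 2 U) (hW : ContDiff ℝ 1 W) (r : ℝ) :
    HasDerivAt (fun s => ∫ θ in (-π)..π, pohozaevDensity W U s θ)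
      (∫ θ in (-π)..π, radialDerivPohozaevDensity W U r θ) r :=
  hasDerivAt_intervalIntegral_of_continuous _ _ (continuous_pohozaevDensity hU hW.continuous)
    (continuous_radialDerivPohozaevDensity hU hW)
    (hasDerivAt_pohozaevDensity hU (hW.differentiable one_ne_zero)) r

lemma hasDerivAt_sq_mul_integral_pohozaevDensity (hU : ContDiff ℝ 2 U) (hW : ContDiff ℝ 1 W)
    (hpde : ∀ x, lap U x = gradient W (U x)) (r : ℝ) :
    HasDerivAt (fun s => s ^ 2 * ∫ θ in (-π)..π, pohozaevDensity W U s θ)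
      (2 * (r * ∫ θ in (-π)..π, W (U (r • polarUnit θ)))) r := by
  refine ((hasDerivAt_pow 2 r).mul (hasDerivAt_integral_pohozaevDensity hU hW r)).congr_deriv ?_
  norm_num
  linear_combination r * integral_pohozaev_identity hU hW hpde r

/-- Pohozaev's identity `2 ∫_{B_R} W(U) = R ∫_{∂B_R} (½|∂_s U|² + W(U) - ½|∂_ν U|²)`. -/
lemma setIntegral_ball_eq_pohozaev (hU : ContDiff ℝ 2 U) (hW : ContDiff ℝ 1 W)
    (hpde : ∀ x, lap U x = gradient W (U x)) {R : ℝ} (hR : 0 ≤ R) :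
    ∫ x in ball 0 R, W (U x) = R ^ 2 * (∫ θ in (-π)..π, pohozaevDensity W U R θ) / 2 := by
  have hcont : Continuous fun r => 2 * (r * ∫ θ in (-π)..π, W (U (r • polarUnit θ))) := by
    have := intervalIntegral.continuous_parametric_intervalIntegral_of_continuous' (μ := volume)
      (continuous_potential_polar hU.continuous hW.continuous) (-π) π
    fun_prop
  have hFTC := intervalIntegral.integral_eq_sub_of_hasDerivAt
    (fun r _ => hasDerivAt_sq_mul_integral_pohozaevDensity hU hW hpde r)
    (hcont.intervalIntegrable 0 R)
  have hpolar := setIntegral_annulus_eq_polar (hW.continuous.comp hU.continuous) le_rfl hR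
  rw [ball_zero, sdiff_empty] at hpolar
  simp only [intervalIntegral.integral_const_mul, Function.comp_apply] at hFTC hpolar
  rw [hpolar]
  linarith

lemma one_div_mul_setIntegral_ball_eq (hU : ContDiff ℝ 2 U) (hW : ContDiff ℝ 1 W)
    (hpde : ∀ x, lap U x = gradient W (U x)) {R : ℝ} (hR : 0 < R) :
    1 / R * ∫ x in ball 0 R, W (U x) = R * (∫ θ in (-π)..π, pohozaevDensity W U R θ) / 2 := by
  rw [setIntegral_ball_eq_pohozaev hU hW hpde hR.le]
  field_simp

lemma hasDerivAt_mul_integral_pohozaevDensity (hU : ContDiff ℝ 2 U) (hW : ContDiff ℝ 1 W)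
    (hpde : ∀ x, lap U x = gradient W (U x)) (r : ℝ) :
    HasDerivAt (fun s => s * (∫ θ in (-π)..π, pohozaevDensity W U s θ) / 2)
      (∫ θ in (-π)..π, (W (U (r • polarUnit θ)) - pohozaevDensity W U r θ / 2)) r := by
  have hP := (continuous_pohozaevDensity hU hW.continuous).uncurry_left r
  have hWU := (continuous_potential_polar hU.continuous hW.continuous).uncurry_left r
  refine (((hasDerivAt_id r).mul (hasDerivAt_integral_pohozaevDensity hU hW r)).div_const
    2).congr_deriv ?_
  rw [intervalIntegral.integral_sub (hWU.intervalIntegrable _ _)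
    ((hP.intervalIntegrable _ _).div_const 2), intervalIntegral.integral_div, id]
  linear_combination (integral_pohozaev_identity hU hW hpde r) / 2

lemma one_div_mul_setIntegral_ball_sub_eq (hU : ContDiff ℝ 2 U) (hW : ContDiff ℝ 1 W)
    (hpde : ∀ x, lap U x = gradient W (U x)) {R₁ R₂ : ℝ} (hR₁ : 0 < R₁) (hR₁₂ : R₁ ≤ R₂) :
    1 / R₂ * (∫ x in ball 0 R₂, W (U x)) - 1 / R₁ * ∫ x in ball 0 R₁, W (U x)
      = ∫ r in R₁..R₂, ∫ θ in (-π)..π, (W (U (r • polarUnit θ)) - pohozaevDensity W U r θ / 2) := by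
  have hcont : Continuous fun r =>
      ∫ θ in (-π)..π, (W (U (r • polarUnit θ)) - pohozaevDensity W U r θ / 2) :=
    intervalIntegral.continuous_parametric_intervalIntegral_of_continuous'
      (continuous_potential_sub_half_pohozaevDensity hU hW.continuous) _ _
  rw [one_div_mul_setIntegral_ball_eq hU hW hpde hR₁,
    one_div_mul_setIntegral_ball_eq hU hW hpde (hR₁.trans_le hR₁₂),
    intervalIntegral.integral_eq_sub_of_hasDerivAt
      (fun r _ => hasDerivAt_mul_integral_pohozaevDensity hU hW hpde r)
      (hcont.intervalIntegrable _ _)]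

end Pohozaev

section Equipartition

variable {U : ℝ² → ℝ²} {W : ℝ² → ℝ}

/-- Its product with `equipartitionSum W U x` is the discrepancy `W(U x) - ½|∇U x|²`. -/
def equipartitionDefect (W : ℝ² → ℝ) (U : ℝ² → ℝ²) (x : ℝ²) : ℝ :=
  √(W (U x)) - 1 / √2 * ‖fderiv ℝ U x‖

def equipartitionSum (W : ℝ² → ℝ) (U : ℝ² → ℝ²) (x : ℝ²) : ℝ :=
  √(W (U x)) + 1 / √2 * ‖fderiv ℝ U x‖

lemma continuous_equipartitionDefect (hU : ContDiff ℝ 1 U) (hW : Continuous W) :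
    Continuous (equipartitionDefect W U) := by
  have := hU.continuous_fderiv one_ne_zero
  have := hU.continuous
  unfold equipartitionDefect
  fun_prop

lemma continuous_equipartitionSum (hU : ContDiff ℝ 1 U) (hW : Continuous W) :
    Continuous (equipartitionSum W U) := by
  have := hU.continuous_fderiv one_ne_zero
  have := hU.continuous
  unfold equipartitionSum
  fun_prop

lemma equipartitionSum_nonneg (x : ℝ²) : 0 ≤ equipartitionSum W U x := by
  unfold equipartitionSum
  positivity

lemma equipartitionSum_sq_le (hWnn : ∀ q, 0 ≤ W q) (x : ℝ²) :
    equipartitionSum W U x ^ 2 ≤ 2 * (1 / 2 * ‖fderiv ℝ U x‖ ^ 2 + W (U x)) := by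
  have hsqrt2 : (1 / √2) ^ 2 = 1 / 2 := by rw [div_pow, Real.sq_sqrt zero_le_two, one_pow]
  unfold equipartitionSum
  nlinarith [Real.sq_sqrt (hWnn (U x)), sq_nonneg (√(W (U x)) - 1 / √2 * ‖fderiv ℝ U x‖)]

lemma setIntegral_equipartitionSum_sq_le_energy (hU : ContDiff ℝ 1 U) (hW : Continuous W)
    (hWnn : ∀ q, 0 ≤ W q) {s : Set ℝ²} (hs : MeasurableSet s) {R : ℝ} (hsR : s ⊆ ball 0 R) :
    ∫ x in s, equipartitionSum W U x ^ 2 ≤ 2 * energy W U (ball 0 R) := by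
  have hdens : Continuous fun x => 1 / 2 * ‖fderiv ℝ U x‖ ^ 2 + W (U x) := by
    have := hU.continuous_fderiv one_ne_zero
    have := hU.continuous
    fun_prop
  have hint : IntegrableOn (fun x => 1 / 2 * ‖fderiv ℝ U x‖ ^ 2 + W (U x)) (ball 0 R) :=
    (hdens.continuousOn.integrableOn_compact (isCompact_closedBall 0 R)).mono_set
      ball_subset_closedBall
  calc ∫ x in s, equipartitionSum W U x ^ 2
      ≤ ∫ x in s, 2 * (1 / 2 * ‖fderiv ℝ U x‖ ^ 2 + W (U x)) :=
        setIntegral_mono_on (((continuous_equipartitionSum hU hW).memLp_two_restrict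
          (isBounded_ball.subset hsR)).integrable_sq) ((hint.mono_set hsR).const_mul 2) hs
          fun x _ => equipartitionSum_sq_le hWnn x
    _ = 2 * ∫ x in s, (1 / 2 * ‖fderiv ℝ U x‖ ^ 2 + W (U x)) := integral_const_mul _ _
    _ ≤ 2 * energy W U (ball 0 R) := by
        refine mul_le_mul_of_nonneg_left (setIntegral_mono_set hint ?_ hsR.eventuallyLE) zero_le_two
        exact .of_forall fun x => by have := hWnn (U x); positivity

lemma mul_neg_abs_equipartitionDefect_mul_le (hWnn : ∀ q, 0 ≤ W q) {R₁ r : ℝ} (hR₁ : 0 < R₁)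
    (hr : R₁ ≤ r) (θ : ℝ) :
    r * (-(1 / (2 * R₁)) * (|equipartitionDefect W U (r • polarUnit θ)|
        * equipartitionSum W U (r • polarUnit θ)))
      ≤ W (U (r • polarUnit θ)) - pohozaevDensity W U r θ / 2 := by
  set k := |equipartitionDefect W U (r • polarUnit θ)| * equipartitionSum W U (r • polarUnit θ)
  have hbound : -k ≤ W (U (r • polarUnit θ)) + ‖fderiv ℝ U (r • polarUnit θ) (polarUnit θ)‖ ^ 2 / 2
      - ‖fderiv ℝ U (r • polarUnit θ) (polarTangent θ)‖ ^ 2 / 2 :=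
    neg_abs_sub_mul_add_le (hWnn _) _ _ (norm_polarTangent θ).le
  have hk : 0 ≤ k := mul_nonneg (abs_nonneg _) (equipartitionSum_nonneg _)
  have hr' : 1 / 2 ≤ r * (1 / (2 * R₁)) := by
    rw [mul_one_div, le_div_iff₀ (by positivity)]
    linarith
  unfold pohozaevDensity
  linarith [mul_le_mul_of_nonneg_right hr' hk]

lemma neg_setIntegral_annulus_le (hU : ContDiff ℝ 2 U) (hW : ContDiff ℝ 1 W)
    (hWnn : ∀ q, 0 ≤ W q) {R₁ R₂ : ℝ} (hR₁ : 0 < R₁) (hR₁₂ : R₁ ≤ R₂) :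
    -(1 / (2 * R₁)) * ∫ x in ball 0 R₂ \ ball 0 R₁,
        |equipartitionDefect W U x| * equipartitionSum W U x
      ≤ ∫ r in R₁..R₂, ∫ θ in (-π)..π, (W (U (r • polarUnit θ)) - pohozaevDensity W U r θ / 2) := by
  set k := fun x => -(1 / (2 * R₁)) * (|equipartitionDefect W U x| * equipartitionSum W U x)
  have hk : Continuous k := by
    have := continuous_equipartitionDefect (hU.of_le one_le_two) hW.continuous
    have := continuous_equipartitionSum (hU.of_le one_le_two) hW.continuous
    fun_prop
  have hlhs : Continuous (Function.uncurry fun r θ => r * k (r • polarUnit θ)) := by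
    unfold Function.uncurry; fun_prop
  have hrhs := continuous_potential_sub_half_pohozaevDensity hU hW.continuous
  have hlhs_int := intervalIntegral.continuous_parametric_intervalIntegral_of_continuous'
    (μ := volume) hlhs (-π) π
  have hrhs_int := intervalIntegral.continuous_parametric_intervalIntegral_of_continuous'
    (μ := volume) hrhs (-π) π
  rw [← integral_const_mul, setIntegral_annulus_eq_polar hk hR₁.le hR₁₂]
  refine intervalIntegral.integral_mono_on hR₁₂ (hlhs_int.intervalIntegrable _ _)
    (hrhs_int.intervalIntegrable _ _) fun r hr => ?_
  exact intervalIntegral.integral_mono_on (by linarith [pi_pos])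
    ((hlhs.uncurry_left r).intervalIntegrable _ _) ((hrhs.uncurry_left r).intervalIntegrable _ _)
    fun θ _ => mul_neg_abs_equipartitionDefect_mul_le hWnn hR₁ hr.1 θ

end Equipartition

end AllenCahn

open AllenCahn

theorem statement8_general (W : ℝ² → ℝ) (p : Fin 3 → ℝ²) (hW : TripleWell W p)
    (U : ℝ² → ℝ²) (hU : IsEntireSolution W U)
    (C₁ : ℝ) (hC₁ : ∀ R > 0, energy W U (Metric.ball 0 R) ≤ C₁ * R) :
    ∀ R₁ R₂ : ℝ, 0 < R₁ → R₁ < R₂ →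
      (1 / R₂) * (∫ x in Metric.ball (0:ℝ²) R₂, W (U x))
        - (1 / R₁) * (∫ x in Metric.ball (0:ℝ²) R₁, W (U x))
      ≥ -(Real.sqrt (C₁ / 2)) * (Real.sqrt R₂ / R₁) *
          Real.sqrt (∫ x in Metric.ball (0:ℝ²) R₂ \ Metric.ball (0:ℝ²) R₁,
            (Real.sqrt (W (U x)) - (1 / Real.sqrt 2) * ‖fderiv ℝ U x‖) ^ 2) := by
  intro R₁ R₂ hR₁ hR₁₂
  obtain ⟨hU2, hpde⟩ := hU
  have hU1 : ContDiff ℝ 1 U := hU2.of_le one_le_two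
  have hW1 : ContDiff ℝ 1 W := hW.smooth.of_le one_le_two
  set A := ball (0 : ℝ²) R₂ \ ball 0 R₁
  have hA : Bornology.IsBounded A := isBounded_ball.subset sdiff_subset
  have hCS : ∫ x in A, |equipartitionDefect W U x| * equipartitionSum W U x
      ≤ Real.sqrt (∫ x in A, equipartitionDefect W U x ^ 2)
        * Real.sqrt (∫ x in A, equipartitionSum W U x ^ 2) := by
    simpa only [sq_abs] using integral_mul_le_sqrt_mul_sqrt (.of_forall fun _ => abs_nonneg _)
      (.of_forall equipartitionSum_nonneg)
      ((continuous_equipartitionDefect hU1 hW1.continuous).abs.memLp_two_restrict hA)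
      ((continuous_equipartitionSum hU1 hW1.continuous).memLp_two_restrict hA)
  have hEnergy : ∫ x in A, equipartitionSum W U x ^ 2 ≤ 2 * (C₁ * R₂) :=
    (setIntegral_equipartitionSum_sq_le_energy hU1 hW1.continuous hW.nonneg
      (measurableSet_ball.diff measurableSet_ball) sdiff_subset).trans
      (by linarith [hC₁ R₂ (hR₁.trans hR₁₂)])
  have hsqrt : Real.sqrt (2 * (C₁ * R₂)) = 2 * Real.sqrt (C₁ / 2) * Real.sqrt R₂ := by
    rw [show 2 * (C₁ * R₂) = C₁ / 2 * (2 ^ 2 * R₂) by ring, Real.sqrt_mul' _ (by nlinarith),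
      Real.sqrt_mul (by positivity), Real.sqrt_sq zero_le_two]
    ring
  rw [ge_iff_le, one_div_mul_setIntegral_ball_sub_eq hU2 hW1 hpde hR₁ hR₁₂.le]
  refine le_trans ?_ (neg_setIntegral_annulus_le hU2 hW1 hW.nonneg hR₁ hR₁₂.le)
  set Q := ∫ x in A, equipartitionDefect W U x ^ 2
  calc -Real.sqrt (C₁ / 2) * (Real.sqrt R₂ / R₁) * Real.sqrt Q
      = -(1 / (2 * R₁)) * (Real.sqrt Q * Real.sqrt (2 * (C₁ * R₂))) := by
        rw [hsqrt]; field_simp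
    _ ≤ -(1 / (2 * R₁)) * ∫ x in A, |equipartitionDefect W U x| * equipartitionSum W U x := by
        refine mul_le_mul_of_nonpos_left (hCS.trans ?_) (by simp [hR₁.le])
        gcongr

/-- almost-monotonicity estimate for `W̃(R) = (1/R)∫_{B_R} W(U)`. -/
theorem statement8 (W : ℝ² → ℝ) (p : Fin 3 → ℝ²) (hW : TripleWell W p)
    (U : ℝ² → ℝ²) (hU : IsEntireSolution W U) (hbd : ∃ C : ℝ, ∀ x, ‖U x‖ ≤ C)
    (hmin : IsLocalMinimizer W U)
    (C₁ : ℝ) (hC₁ : ∀ R > 0, energy W U (Metric.ball 0 R) ≤ C₁ * R) :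
    ∀ R₁ R₂ : ℝ, 0 < R₁ → R₁ < R₂ →
      (1 / R₂) * (∫ x in Metric.ball (0:ℝ²) R₂, W (U x))
        - (1 / R₁) * (∫ x in Metric.ball (0:ℝ²) R₁, W (U x))
      ≥ -(Real.sqrt (C₁ / 2)) * (Real.sqrt R₂ / R₁) *
          Real.sqrt (∫ x in Metric.ball (0:ℝ²) R₂ \ Metric.ball (0:ℝ²) R₁,
            (Real.sqrt (W (U x)) - (1 / Real.sqrt 2) * ‖fderiv ℝ U x‖) ^ 2) :=
  statement8_general W p hW U hU C₁ hC₁
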